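/- arXiv:2009.01699 — 2 statements merged into one kernel-verified Lean document; each statement's English description precedes it below -/
import Mathlib

section
/- Let n ≥ 2, let K ≥ 1, and let L ≥ 2K√n. Let R_n be an n×n random matrix with i.i.d. lazy Rademacher entries, write R_{n−1} for its top-left (n−1)×(n−1) submatrix, u ∈ ℝ^{n−1} for the first n−1 entries of its last column, and wᵀ for the first n−1 entries of its last row (so R_{n−1}, u, w, and the (n,n) entry are jointly independent with lazy Rademacher entries). Let A = diag(L, …, L, 0) be the n×n diagonal matrix with first n−1 diagonal entries L and last diagonal entry 0. Then for every ε ≥ 0, (1/2)·P[ |Σ_{i≥0} wᵀ(R_{n−1}/L)^i u| ≤ Lε and ‖R_{n−1}‖ ≤ K√n ] ≤ P[s_n(A − R_n) ≤ ε] + P[‖R_n‖ > K√n]. -/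
open MeasureTheory ProbabilityTheory Matrix
open scoped ENNReal

noncomputable section

/-- The Euclidean norm of a finite real vector. -/
def euclNorm {m : ℕ} (v : Fin m → ℝ) : ℝ := Real.sqrt (∑ i, v i ^ 2)

/-- A vector of `Fin m → ℝ` regarded as an element of Euclidean space. -/
def toE {m : ℕ} (v : Fin m → ℝ) : EuclideanSpace ℝ (Fin m) :=
  (WithLp.equiv 2 (Fin m → ℝ)).symm v

/-- The smallest singular value of a square matrix:
`s_n(A) = inf_{‖x‖₂ = 1} ‖Ax‖₂`. -/
def smin {n : ℕ} (A : Matrix (Fin n) (Fin n) ℝ) : ℝ :=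
  sInf {r | ∃ x : Fin n → ℝ, euclNorm x = 1 ∧ r = euclNorm (A.mulVec x)}

/-- The singular values of an m×n matrix (m ≤ n intended): the square roots of the
eigenvalues of `A * Aᵀ`. -/
def svals {m n : ℕ} (A : Matrix (Fin m) (Fin n) ℝ) : Fin m → ℝ :=
  fun i => Real.sqrt ((Matrix.isHermitian_mul_conjTranspose_self A).eigenvalues i)

/-- The `K`-rank of an m×n matrix: the number of its singular values of size at least `K√n`. -/
def kRank {m n : ℕ} (K : ℝ) (A : Matrix (Fin m) (Fin n) ℝ) : ℕ :=
  (Finset.univ.filter (fun i => K * Real.sqrt n ≤ svals A i)).card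

/-- The operator (spectral) norm of a matrix, via Euclidean spaces. -/
def specNorm {m n : ℕ} (A : Matrix (Fin m) (Fin n) ℝ) : ℝ :=
  ‖LinearMap.toContinuousLinearMap (Matrix.toEuclideanLin A)‖

/-- The Hilbert–Schmidt (Frobenius) norm of a matrix. -/
def frobNorm {m n : ℕ} (A : Matrix (Fin m) (Fin n) ℝ) : ℝ :=
  Real.sqrt (∑ i, ∑ j, A i j ^ 2)

/-- The least common denominator `LCD_{α,γ}(v)`. -/
def LCD {N : ℕ} (α γ : ℝ) (v : Fin N → ℝ) : ℝ :=
  sInf {θ : ℝ | 0 < θ ∧ ∃ p : Fin N → ℤ,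
    euclNorm (θ • v - fun i => (p i : ℝ)) < min (γ * euclNorm (θ • v)) α}

/-- A vector is `δ`-sparse if it has at most `δN` nonzero coordinates. -/
def IsSparse {N : ℕ} (δ : ℝ) (x : Fin N → ℝ) : Prop :=
  ((Finset.univ.filter (fun i => x i ≠ 0)).card : ℝ) ≤ δ * N

/-- Compressible unit vectors: within distance `ρ` of a `δ`-sparse vector. -/
def Comp {N : ℕ} (δ ρ : ℝ) (x : Fin N → ℝ) : Prop :=
  euclNorm x = 1 ∧ ∃ y : Fin N → ℝ, IsSparse δ y ∧ euclNorm (x - y) ≤ ρ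

/-- Incompressible unit vectors. -/
def Incomp {N : ℕ} (δ ρ : ℝ) (x : Fin N → ℝ) : Prop :=
  euclNorm x = 1 ∧ ¬ Comp δ ρ x

/-- A real random variable is lazy Rademacher if it takes the value 0 with probability 1/2
and the values 1 and -1 with probability 1/4 each. -/
def IsLazyRademacher {Ω : Type*} [MeasurableSpace Ω] (μ : Measure Ω) (X : Ω → ℝ) : Prop :=
  Measurable X ∧ μ {ω | X ω = 0} = 1/2 ∧ μ {ω | X ω = 1} = 1/4 ∧ μ {ω | X ω = -1} = 1/4

/-- `X` has sub-Gaussian norm at most `s`, i.e. `E[exp(X²/s²)] ≤ 2`. -/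
def HasSubgaussianNormLE {Ω : Type*} [MeasurableSpace Ω] (μ : Measure Ω) (X : Ω → ℝ)
    (s : ℝ) : Prop :=
  Integrable (fun ω => Real.exp (X ω ^ 2 / s ^ 2)) μ ∧
    (∫ ω, Real.exp (X ω ^ 2 / s ^ 2) ∂μ) ≤ 2

/-- The entries of the random matrix `M` are i.i.d. copies of `ξ`. -/
def IIDEntries {Ω : Type*} [MeasurableSpace Ω] (μ : Measure Ω) {m n : ℕ}
    (M : Ω → Matrix (Fin m) (Fin n) ℝ) (ξ : Ω → ℝ) : Prop :=
  iIndepFun (fun (p : Fin m × Fin n) ω => M ω p.1 p.2) μ ∧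
    ∀ i j, IdentDistrib (fun ω => M ω i j) ξ μ μ

/-- The (n−1)×n matrix consisting of the first n−1 rows of an n×n matrix. -/
def firstRows {n : ℕ} (A : Matrix (Fin n) (Fin n) ℝ) : Matrix (Fin (n-1)) (Fin n) ℝ :=
  Matrix.submatrix A (Fin.castLE (Nat.sub_le n 1)) id

end

/-- The Borel/pi measurable structure on matrices (entrywise). -/
noncomputable instance matrixMeasurableSpace {m n α : Type*} [MeasurableSpace α] :
    MeasurableSpace (Matrix m n α) :=
  inferInstanceAs (MeasurableSpace (m → n → α))

noncomputable section

/-- The last index of `Fin n` (for `n ≥ 1`). -/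
def lastIdx {n : ℕ} (hn : 1 ≤ n) : Fin n := ⟨n - 1, Nat.sub_lt hn Nat.one_pos⟩

/-- The top-left (n−1)×(n−1) corner of an n×n matrix. -/
def corner {n : ℕ} (R : Matrix (Fin n) (Fin n) ℝ) : Matrix (Fin (n-1)) (Fin (n-1)) ℝ :=
  fun i j => R (Fin.castLE (Nat.sub_le n 1) i) (Fin.castLE (Nat.sub_le n 1) j)

/-- The first n−1 entries of the last column of an n×n matrix. -/
def lastColTop {n : ℕ} (hn : 1 ≤ n) (R : Matrix (Fin n) (Fin n) ℝ) : Fin (n-1) → ℝ :=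
  fun i => R (Fin.castLE (Nat.sub_le n 1) i) (lastIdx hn)

/-- The first n−1 entries of the last row of an n×n matrix. -/
def lastRowLeft {n : ℕ} (hn : 1 ≤ n) (R : Matrix (Fin n) (Fin n) ℝ) : Fin (n-1) → ℝ :=
  fun j => R (lastIdx hn) (Fin.castLE (Nat.sub_le n 1) j)

/-! If `R_{nn} = 0` and `‖R_{n−1}‖ < L`, put
`v = Σ_{i≥0} (R_{n−1}/L)ⁱ u = (1 − R_{n−1}/L)⁻¹ u`. The vector `x = (v/L, 1)` is then killed by
the first `n − 1` rows of `A − R_n`, while its last row gives `−wᵀv/L`, the series in the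
statement divided by `−L`. Since `‖x‖ ≥ 1`, this bounds `s_n(A − R_n)`. The event on
`R_{n−1}, u, w` is independent of the entry `R_{nn}`, which vanishes with probability `1/2`. -/

open scoped Matrix.Norms.L2Operator

section NeumannSeries

variable {m 𝕜 : Type*} [Fintype m] [DecidableEq m] [RCLike 𝕜] {B : Matrix m m 𝕜}

theorem hasSum_dotProduct_pow_mulVec (hB : ‖B‖ < 1) (w u : m → 𝕜) :
    HasSum (fun i : ℕ => w ⬝ᵥ (B ^ i) *ᵥ u) (w ⬝ᵥ (∑' i : ℕ, B ^ i) *ᵥ u) := by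
  have hcont : Continuous fun M : Matrix m m 𝕜 => w ⬝ᵥ M *ᵥ u := by fun_prop
  exact (summable_geometric_of_norm_lt_one hB).hasSum.map
    (AddMonoidHom.mk' (fun M : Matrix m m 𝕜 => w ⬝ᵥ M *ᵥ u) fun M N => by
      rw [add_mulVec, dotProduct_add]) hcont

theorem one_sub_mulVec_tsum_pow_mulVec (hB : ‖B‖ < 1) (u : m → 𝕜) :
    (1 - B) *ᵥ (∑' i : ℕ, B ^ i) *ᵥ u = u := by
  rw [mulVec_mulVec, mul_neg_geom_series B hB, one_mulVec]

end NeumannSeries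

section SmallestSingularValue

variable {m : ℕ}

theorem euclNorm_nonneg (v : Fin m → ℝ) : 0 ≤ euclNorm v := Real.sqrt_nonneg _

theorem euclNorm_smul (c : ℝ) (v : Fin m → ℝ) : euclNorm (c • v) = |c| * euclNorm v := by
  have hsum : ∑ i, (c • v) i ^ 2 = c ^ 2 * ∑ i, v i ^ 2 := by
    simp only [Pi.smul_apply, smul_eq_mul, mul_pow, Finset.mul_sum]
  rw [euclNorm, euclNorm, hsum, Real.sqrt_mul (sq_nonneg c), Real.sqrt_sq_eq_abs]

theorem abs_le_euclNorm (v : Fin m → ℝ) (i : Fin m) : |v i| ≤ euclNorm v := by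
  rw [← Real.sqrt_sq_eq_abs]
  exact Real.sqrt_le_sqrt
    (Finset.single_le_sum (fun j _ => sq_nonneg (v j)) (Finset.mem_univ i))

theorem smin_le_euclNorm_mulVec (A : Matrix (Fin m) (Fin m) ℝ) {x : Fin m → ℝ}
    (hx : 1 ≤ euclNorm x) : smin A ≤ euclNorm (A *ᵥ x) := by
  have hpos : 0 < euclNorm x := one_pos.trans_le hx
  have hunit : euclNorm ((euclNorm x)⁻¹ • x) = 1 := by
    rw [euclNorm_smul, abs_of_pos (inv_pos.mpr hpos), inv_mul_cancel₀ hpos.ne']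
  calc smin A ≤ euclNorm (A *ᵥ (euclNorm x)⁻¹ • x) :=
        csInf_le ⟨0, by rintro r ⟨y, -, rfl⟩; exact euclNorm_nonneg _⟩ ⟨_, hunit, rfl⟩
    _ = (euclNorm x)⁻¹ * euclNorm (A *ᵥ x) := by
        rw [mulVec_smul, euclNorm_smul, abs_of_pos (inv_pos.mpr hpos)]
    _ ≤ euclNorm (A *ᵥ x) :=
        mul_le_of_le_one_left (euclNorm_nonneg _) (inv_le_one_of_one_le₀ hx)

end SmallestSingularValue

section LastIndex

variable {n : ℕ} (hn : 1 ≤ n)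

theorem castLE_ne_lastIdx (j : Fin (n - 1)) : Fin.castLE (Nat.sub_le n 1) j ≠ lastIdx hn :=
  fun h => (Nat.ne_of_lt j.2) (Fin.ext_iff.mp h)

theorem sum_eq_sum_castLE_add_lastIdx {M : Type*} [AddCommMonoid M] (F : Fin n → M) :
    ∑ i, F i = ∑ j : Fin (n - 1), F (Fin.castLE (Nat.sub_le n 1) j) + F (lastIdx hn) := by
  obtain ⟨k, rfl⟩ : ∃ k, n = k + 1 := ⟨n - 1, by omega⟩
  exact Fin.sum_univ_castSucc F

theorem euclNorm_eq_abs_lastIdx {z : Fin n → ℝ}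
    (hz : ∀ j : Fin (n - 1), z (Fin.castLE (Nat.sub_le n 1) j) = 0) :
    euclNorm z = |z (lastIdx hn)| := by
  rw [euclNorm, sum_eq_sum_castLE_add_lastIdx hn]
  simp only [hz, zero_pow two_ne_zero, Finset.sum_const_zero, zero_add, Real.sqrt_sq_eq_abs]

def extendLast (y : Fin (n - 1) → ℝ) (c : ℝ) : Fin n → ℝ :=
  fun i => if h : (i : ℕ) < n - 1 then y ⟨i, h⟩ else c

theorem extendLast_castLE (y : Fin (n - 1) → ℝ) (c : ℝ) (j : Fin (n - 1)) :
    extendLast y c (Fin.castLE (Nat.sub_le n 1) j) = y j :=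
  dif_pos j.2

theorem extendLast_lastIdx (y : Fin (n - 1) → ℝ) (c : ℝ) :
    extendLast y c (lastIdx hn) = c :=
  dif_neg (lt_irrefl _)

variable (N : Matrix (Fin n) (Fin n) ℝ) (y : Fin (n - 1) → ℝ) (c : ℝ)

theorem mulVec_extendLast_castLE (j : Fin (n - 1)) :
    (N *ᵥ extendLast y c) (Fin.castLE (Nat.sub_le n 1) j) =
      (corner N *ᵥ y) j + lastColTop hn N j * c := by
  rw [mulVec, dotProduct, sum_eq_sum_castLE_add_lastIdx hn]
  simp only [extendLast_castLE, extendLast_lastIdx]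
  rfl

theorem mulVec_extendLast_lastIdx :
    (N *ᵥ extendLast y c) (lastIdx hn) =
      lastRowLeft hn N ⬝ᵥ y + N (lastIdx hn) (lastIdx hn) * c := by
  rw [mulVec, dotProduct, sum_eq_sum_castLE_add_lastIdx hn]
  simp only [extendLast_castLE, extendLast_lastIdx]
  rfl

end LastIndex

section SchurComplement

variable {n : ℕ} (hn : 1 ≤ n)

/-- For `R_{nn} = 0` this is `−L` times the Schur complement of the block `L − R_{n−1}` in
`A − R_n`. -/
def schurSeries (L : ℝ) (N : Matrix (Fin n) (Fin n) ℝ) : ℝ :=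
  ∑' i : ℕ, lastRowLeft hn N ⬝ᵥ ((L⁻¹ • corner N) ^ i).mulVec (lastColTop hn N)

theorem smin_le_abs_schurSeries_div {L : ℝ} (hL : 0 < L) (N : Matrix (Fin n) (Fin n) ℝ)
    (hN : specNorm (corner N) < L) (hlast : N (lastIdx hn) (lastIdx hn) = 0) :
    smin (Matrix.diagonal (fun i : Fin n => if (i : ℕ) = n - 1 then 0 else L) - N) ≤
      |schurSeries hn L N| / L := by
  set A := Matrix.diagonal (fun i : Fin n => if (i : ℕ) = n - 1 then 0 else L)
  set B := L⁻¹ • corner N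
  have hB : ‖B‖ < 1 := by
    rw [norm_smul, norm_inv, Real.norm_of_nonneg hL.le, inv_mul_lt_one₀ hL]
    exact hN
  set v := (∑' i : ℕ, B ^ i) *ᵥ lastColTop hn N
  have hv : v - B *ᵥ v = lastColTop hn N := by
    simpa only [sub_mulVec, one_mulVec] using one_sub_mulVec_tsum_pow_mulVec hB (lastColTop hn N)
  have hseries : schurSeries hn L N = lastRowLeft hn N ⬝ᵥ v :=
    (hasSum_dotProduct_pow_mulVec hB _ _).tsum_eq
  set x := extendLast (L⁻¹ • v) 1 with hx_def
  have htop (j : Fin (n - 1)) : ((A - N) *ᵥ x) (Fin.castLE (Nat.sub_le n 1) j) = 0 := by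
    have hj := congrFun hv j
    rw [hx_def, sub_mulVec, Pi.sub_apply, mulVec_diagonal, mulVec_extendLast_castLE hn,
      extendLast_castLE,
      if_neg (show ((Fin.castLE _ j : Fin n) : ℕ) ≠ n - 1 from Nat.ne_of_lt j.2), mulVec_smul]
    simp only [B, smul_mulVec, Pi.sub_apply, Pi.smul_apply, smul_eq_mul] at hj ⊢
    rw [← hj]
    field_simp
    ring
  have hbottom : ((A - N) *ᵥ x) (lastIdx hn) = -(L⁻¹ * schurSeries hn L N) := by
    rw [hx_def, sub_mulVec, Pi.sub_apply, mulVec_diagonal, mulVec_extendLast_lastIdx hn,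
      extendLast_lastIdx,
      if_pos (show ((lastIdx hn : Fin n) : ℕ) = n - 1 from rfl), hlast, dotProduct_smul, hseries,
      smul_eq_mul]
    ring
  have hx : 1 ≤ euclNorm x := by
    simpa [hx_def, extendLast_lastIdx hn] using abs_le_euclNorm x (lastIdx hn)
  calc smin (A - N) ≤ euclNorm ((A - N) *ᵥ x) := smin_le_euclNorm_mulVec _ hx
    _ = |schurSeries hn L N| / L := by
      rw [euclNorm_eq_abs_lastIdx hn htop, hbottom, abs_neg, abs_mul, abs_inv, abs_of_pos hL,
        inv_mul_eq_div]

end SchurComplement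

section OffLastEntry

variable {n : ℕ} (hn : 1 ≤ n) {N N' : Matrix (Fin n) (Fin n) ℝ}
  (h : ∀ i j, (i, j) ≠ (lastIdx hn, lastIdx hn) → N i j = N' i j)
include h

theorem corner_eq_of_eq_off_lastIdx : corner N = corner N' :=
  funext fun i => funext fun _ => h _ _ fun hij => castLE_ne_lastIdx hn i (congrArg Prod.fst hij)

theorem lastRowLeft_eq_of_eq_off_lastIdx : lastRowLeft hn N = lastRowLeft hn N' :=
  funext fun j => h _ _ fun hij => castLE_ne_lastIdx hn j (congrArg Prod.snd hij)

theorem lastColTop_eq_of_eq_off_lastIdx : lastColTop hn N = lastColTop hn N' :=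
  funext fun i => h _ _ fun hij => castLE_ne_lastIdx hn i (congrArg Prod.fst hij)

theorem schurSeries_eq_of_eq_off_lastIdx (L : ℝ) : schurSeries hn L N = schurSeries hn L N' := by
  rw [schurSeries, schurSeries, corner_eq_of_eq_off_lastIdx hn h,
    lastRowLeft_eq_of_eq_off_lastIdx hn h, lastColTop_eq_of_eq_off_lastIdx hn h]

end OffLastEntry

section Continuity

variable {n : ℕ} (hn : 1 ≤ n)

theorem continuous_corner : Continuous (corner : Matrix (Fin n) (Fin n) ℝ → _) :=
  continuous_pi fun _ => continuous_pi fun _ => continuous_apply_apply _ _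

theorem continuous_lastRowLeft : Continuous (lastRowLeft hn) :=
  continuous_pi fun _ => continuous_apply_apply _ _

theorem continuous_lastColTop : Continuous (lastColTop hn) :=
  continuous_pi fun _ => continuous_apply_apply _ _

end Continuity

theorem measurable_schurSeries_comp {n : ℕ} (hn : 1 ≤ n) (L : ℝ) {α : Type*}
    [TopologicalSpace α] [MeasurableSpace α] [OpensMeasurableSpace α]
    {g : α → Matrix (Fin n) (Fin n) ℝ} (hg : Continuous g) :
    Measurable fun a => schurSeries hn L (g a) := by
  have hcorner := continuous_corner.comp hg
  have hrow := (continuous_lastRowLeft hn).comp hg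
  have hcol := (continuous_lastColTop hn).comp hg
  exact Measurable.tsum fun i =>
    (hrow.dotProduct (((hcorner.const_smul L⁻¹).pow i).matrix_mulVec hcol)).measurable

theorem ProbabilityTheory.iIndepFun.indepFun_update {Ω ι β : Type*} [MeasurableSpace Ω]
    {μ : Measure Ω} [Fintype ι] [DecidableEq ι] [MeasurableSpace β] {f : ι → Ω → β}
    (hf : iIndepFun f μ) (hmeas : ∀ i, Measurable (f i)) (i : ι) (c : β) :
    IndepFun (fun ω => Function.update (fun j => f j ω) i c) (f i) μ := by
  have hsplit := hf.indepFun_finset (Finset.univ.erase i) {i}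
    (Finset.disjoint_singleton_right.mpr (Finset.notMem_erase i _)) hmeas
  let extend : (Finset.univ.erase i → β) → ι → β :=
    fun t j => if hj : j ∈ Finset.univ.erase i then t ⟨j, hj⟩ else c
  have hextend : Measurable extend := measurable_pi_lambda _ fun j => by
    by_cases hj : j ∈ Finset.univ.erase i
    · simpa only [extend, dif_pos hj] using measurable_pi_apply _
    · simp only [extend, dif_neg hj, measurable_const]
  convert hsplit.comp hextend (measurable_pi_apply ⟨i, Finset.mem_singleton_self i⟩) using 1
  · funext ω j
    by_cases hj : j = i
    · subst hj; simp [extend]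
    · simp [extend, hj]
  · rfl

theorem ProbabilityTheory.iIndepFun.measure_inter_entry_preimage_eq_mul {Ω m n : Type*}
    [MeasurableSpace Ω] {μ : Measure Ω} [Fintype m] [Fintype n] [DecidableEq m] [DecidableEq n]
    {R : Ω → Matrix m n ℝ} (hindep : iIndepFun (fun (p : m × n) ω => R ω p.1 p.2) μ)
    (hmeas : ∀ i j, Measurable fun ω => R ω i j) (a : m) (b : n) {P : Matrix m n ℝ → Prop}
    (hP : MeasurableSet {t : m × n → ℝ | P (Matrix.of fun i j => t (i, j))})
    (hP_off : ∀ N N' : Matrix m n ℝ,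
      (∀ i j, (i, j) ≠ (a, b) → N i j = N' i j) → P N → P N')
    {B : Set ℝ} (hB : MeasurableSet B) :
    μ ({ω | P (R ω)} ∩ (fun ω => R ω a b) ⁻¹' B) =
      μ {ω | P (R ω)} * μ ((fun ω => R ω a b) ⁻¹' B) := by
  let erased : Ω → m × n → ℝ := fun ω => Function.update (fun p => R ω p.1 p.2) (a, b) 0
  have hoff (ω : Ω) (i : m) (j : n) (hij : (i, j) ≠ (a, b)) :
      Matrix.of (fun i j => erased ω (i, j)) i j = R ω i j := by
    simp only [Matrix.of_apply, erased, Function.update_of_ne hij]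
  have hevent : {ω | P (R ω)} = erased ⁻¹' {t | P (Matrix.of fun i j => t (i, j))} :=
    Set.ext fun ω => ⟨hP_off _ _ fun i j hij => (hoff ω i j hij).symm, hP_off _ _ (hoff ω)⟩
  rw [hevent]
  exact (hindep.indepFun_update (fun p => hmeas p.1 p.2) (a, b) 0).measure_inter_preimage_eq_mul
    _ _ hP hB

/-- reduction of the smallest singular value of `A − Rₙ` to the
anti-concentration of `Σ_{i≥0} wᵀ(R_{n−1}/L)ⁱ u`. -/
theorem reduction_to_quadratic {n : ℕ} (hn : 2 ≤ n) (K L : ℝ) (hK : 1 ≤ K)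
    (hL : 2 * K * Real.sqrt n ≤ L)
    {Ω : Type*} [MeasurableSpace Ω] (μ : Measure Ω)
    (R : Ω → Matrix (Fin n) (Fin n) ℝ)
    (hindep : iIndepFun (fun (p : Fin n × Fin n) ω => R ω p.1 p.2) μ)
    (hdist : ∀ i j, IsLazyRademacher μ (fun ω => R ω i j))
    (ε : ℝ) :
    (1/2 : ℝ≥0∞) * μ {ω | |∑' i : ℕ, lastRowLeft (by omega) (R ω) ⬝ᵥ
          (((L⁻¹ • corner (R ω)) ^ i).mulVec (lastColTop (by omega) (R ω)))| ≤ L * ε ∧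
        specNorm (corner (R ω)) ≤ K * Real.sqrt n} ≤
      μ {ω | smin (Matrix.diagonal (fun i : Fin n => if (i:ℕ) = n - 1 then 0 else L) - R ω)
          ≤ ε} +
      μ {ω | K * Real.sqrt n < specNorm (R ω)} := by
  have h1n : 1 ≤ n := by omega
  have hKn : 0 < K * Real.sqrt n :=
    mul_pos (one_pos.trans_le hK) (Real.sqrt_pos.mpr (by exact_mod_cast h1n))
  have hKL : K * Real.sqrt n < L := by linarith
  have hL0 : 0 < L := hKn.trans hKL
  let good : Matrix (Fin n) (Fin n) ℝ → Prop := fun N =>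
    |schurSeries h1n L N| ≤ L * ε ∧ specNorm (corner N) ≤ K * Real.sqrt n
  have hmeas_good :
      MeasurableSet {t : Fin n × Fin n → ℝ | good (Matrix.of fun i j => t (i, j))} := by
    have hof : Continuous fun t : Fin n × Fin n → ℝ => Matrix.of fun i j => t (i, j) := by
      fun_prop
    exact (measurableSet_le (measurable_schurSeries_comp h1n L hof).abs measurable_const).inter
      (measurableSet_le (continuous_norm.comp (continuous_corner.comp hof)).measurable
        measurable_const)
  have hsplit := hindep.measure_inter_entry_preimage_eq_mul (fun i j => (hdist i j).1)
    (lastIdx h1n) (lastIdx h1n) hmeas_good (fun N N' hoff hN => by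
      simpa only [good, schurSeries_eq_of_eq_off_lastIdx h1n hoff,
        corner_eq_of_eq_off_lastIdx h1n hoff] using hN)
    (measurableSet_singleton 0)
  have hlast_zero : μ ((fun ω => R ω (lastIdx h1n) (lastIdx h1n)) ⁻¹' {0}) = 1 / 2 :=
    (hdist _ _).2.1
  show (1/2 : ℝ≥0∞) * μ {ω | good (R ω)} ≤ _
  calc (1/2 : ℝ≥0∞) * μ {ω | good (R ω)}
      = μ ({ω | good (R ω)} ∩ (fun ω => R ω (lastIdx h1n) (lastIdx h1n)) ⁻¹' {0}) := by
        rw [hsplit, hlast_zero, mul_comm]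
    _ ≤ _ := measure_mono fun ω ⟨hgood, hlast⟩ => by
        refine (smin_le_abs_schurSeries_div h1n hL0 (R ω) (hgood.2.trans_lt hKL) hlast).trans ?_
        rw [div_le_iff₀ hL0]
        linarith [hgood.1]
    _ ≤ _ := le_self_add

end
end

section
/- Let γ ∈ (0,1), α > 0, and D ≥ α. For every x ∈ S^{n−1} with D ≤ LCD_{α,γ}(x) ≤ 2D, there exists p ∈ ℤⁿ with 0 < ‖p‖₂ ≤ 3D such that ‖x − p/‖p‖₂‖₂ ≤ 2α/D. In other words, the set 𝒫 = {p/‖p‖₂ : p ∈ ℤⁿ∖{0}, ‖p‖₂ ≤ 3D} is a (2α/D)-net in Euclidean norm of the level set S_D = {x ∈ S^{n−1} : D ≤ LCD_{α,γ}(x) ≤ 2D}. -/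
open MeasureTheory ProbabilityTheory Matrix
open scoped ENNReal

/- A point `p ∈ ℤⁿ` with `‖θx - p‖₂ < α` for some `θ` slightly above `LCD(x) ∈ [D, 2D]` has
`‖p‖₂ < θ + α < 3D + ε`, and since `‖p‖₂²` is an integer this forces `‖p‖₂ ≤ 3D` once `ε` is
small. Comparing the normalizations of `θx` and `p` costs at most `2‖θx - p‖₂ / θ < 2α/D`. -/

namespace NormedSpace

variable {V : Type*} [NormedAddCommGroup V] [NormedSpace ℝ V]

lemma norm_normalize_le (v : V) : ‖normalize v‖ ≤ 1 := by
  rw [NormedSpace.normalize, norm_smul, norm_inv, norm_norm]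
  exact inv_mul_le_one_of_le₀ le_rfl (norm_nonneg v)

lemma norm_normalize_sub_normalize_le {u : V} (hu : u ≠ 0) (v : V) :
    ‖normalize u - normalize v‖ ≤ 2 * ‖u - v‖ / ‖u‖ := by
  have hu' : 0 < ‖u‖ := norm_pos_iff.2 hu
  have key : ‖u‖ • (normalize u - normalize v) = (u - v) + (‖v‖ - ‖u‖) • normalize v := by
    rw [smul_sub, norm_smul_normalize, sub_smul, norm_smul_normalize]
    abel
  rw [le_div_iff₀ hu', mul_comm, ← abs_of_pos hu', ← Real.norm_eq_abs, ← norm_smul, key]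
  calc ‖(u - v) + (‖v‖ - ‖u‖) • normalize v‖
      ≤ ‖u - v‖ + |‖v‖ - ‖u‖| * ‖normalize v‖ := by
        grw [norm_add_le, norm_smul, Real.norm_eq_abs]
    _ ≤ ‖u - v‖ + ‖u - v‖ * 1 := by
        gcongr
        · rw [norm_sub_rev u]; exact abs_norm_sub_norm_le v u
        · exact norm_normalize_le v
    _ = 2 * ‖u - v‖ := by ring

end NormedSpace

lemma euclNorm_eq_norm_toE {m : ℕ} (v : Fin m → ℝ) : euclNorm v = ‖toE v‖ := by
  simp [EuclideanSpace.norm_eq, euclNorm, toE, Real.norm_eq_abs, sq_abs]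

lemma exists_pos_forall_euclNorm_intCast_le {n : ℕ} {r : ℝ} (hr : 0 ≤ r) :
    ∃ ε > 0, ∀ p : Fin n → ℤ,
      euclNorm (fun i => (p i : ℝ)) < r + ε → euclNorm (fun i => (p i : ℝ)) ≤ r := by
  have hfloor : r ^ 2 < ⌊r ^ 2⌋ + 1 := Int.lt_floor_add_one _
  refine ⟨√(⌊r ^ 2⌋ + 1) - r, sub_pos.2 ((Real.lt_sqrt hr).2 hfloor), fun p hp => ?_⟩
  rw [add_sub_cancel, euclNorm, Real.sqrt_lt_sqrt_iff (by positivity)] at hp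
  have hsum : ∑ i, (p i : ℝ) ^ 2 ≤ ⌊r ^ 2⌋ := by
    exact_mod_cast Int.lt_add_one_iff.1 (by exact_mod_cast hp)
  exact (Real.sqrt_le_left hr).2 (hsum.trans (Int.floor_le _))

lemma exists_lt_LCD_add {N : ℕ} {α γ : ℝ} {v : Fin N → ℝ} (hpos : 0 < LCD α γ v)
    {ε : ℝ} (hε : 0 < ε) :
    ∃ θ, LCD α γ v ≤ θ ∧ θ < LCD α γ v + ε ∧
      ∃ p : Fin N → ℤ, euclNorm (θ • v - fun i => (p i : ℝ)) < α := by
  set S := {θ : ℝ | 0 < θ ∧ ∃ p : Fin N → ℤ,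
    euclNorm (θ • v - fun i => (p i : ℝ)) < min (γ * euclNorm (θ • v)) α}
  have hS : S.Nonempty := Set.nonempty_iff_ne_empty.2 fun hS =>
    hpos.ne' (by rw [show LCD α γ v = sInf S from rfl, hS, Real.sInf_empty])
  obtain ⟨θ, ⟨hθ, p, hp⟩, hlt⟩ := Real.lt_sInf_add_pos hS hε
  exact ⟨θ, csInf_le ⟨0, fun _ h => h.1.le⟩ ⟨hθ, p, hp⟩, hlt, p, hp.trans_le (min_le_right _ _)⟩

theorem net_of_lcd_level_set_general {n : ℕ} (γ α D : ℝ) (hα : 0 < α)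
    (hD : α ≤ D) (x : Fin n → ℝ) (hx : euclNorm x = 1)
    (h1 : D ≤ LCD α γ x) (h2 : LCD α γ x ≤ 2 * D) :
    ∃ p : Fin n → ℤ, 0 < euclNorm (fun i => (p i : ℝ)) ∧
      euclNorm (fun i => (p i : ℝ)) ≤ 3 * D ∧
      euclNorm (x - (euclNorm (fun i => (p i : ℝ)))⁻¹ • (fun i => (p i : ℝ))) ≤ 2 * α / D := by
  have hD0 : 0 < D := hα.trans_le hD
  obtain ⟨ε, hε, hgap⟩ := exists_pos_forall_euclNorm_intCast_le (r := 3 * D) (by positivity)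
  obtain ⟨θ, hθ, hθε, p, hp⟩ := exists_lt_LCD_add (hD0.trans_le h1) hε
  have hθ0 : 0 < θ := hD0.trans_le (h1.trans hθ)
  set X := toE x
  set P := toE fun i => (p i : ℝ)
  have hP : euclNorm (fun i => (p i : ℝ)) = ‖P‖ := euclNorm_eq_norm_toE _
  rw [euclNorm_eq_norm_toE] at hx hp
  change ‖θ • X - P‖ < α at hp
  have hθX : ‖θ • X‖ = θ := by rw [norm_smul, hx, Real.norm_of_nonneg hθ0.le, mul_one]
  have hX : X = NormedSpace.normalize (θ • X) := by
    rw [NormedSpace.normalize_smul_of_pos hθ0, NormedSpace.normalize_eq_self_of_norm_eq_one hx]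
  have hP_pos : 0 < ‖P‖ := by linarith [norm_sub_norm_le (θ • X) P]
  have hP_lt : ‖P‖ < 3 * D + ε := by linarith [norm_sub_norm_le P (θ • X), norm_sub_rev P (θ • X)]
  refine ⟨p, hP ▸ hP_pos, hgap p (hP ▸ hP_lt), ?_⟩
  calc euclNorm (x - (euclNorm fun i => (p i : ℝ))⁻¹ • fun i => (p i : ℝ))
      = ‖NormedSpace.normalize (θ • X) - NormedSpace.normalize P‖ := by
        rw [hP, euclNorm_eq_norm_toE, ← hX]; rfl
    _ ≤ 2 * ‖θ • X - P‖ / ‖θ • X‖ :=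
        NormedSpace.norm_normalize_sub_normalize_le (norm_pos_iff.1 (hθX.symm ▸ hθ0)) P
    _ ≤ 2 * α / D := by rw [hθX]; gcongr; linarith

/-- normalized integer points of norm at most `3D` form a `(2α/D)`-net of the
level set `S_D` of the LCD. -/
theorem net_of_lcd_level_set {n : ℕ} (γ α D : ℝ) (hγ : γ ∈ Set.Ioo (0:ℝ) 1) (hα : 0 < α)
    (hD : α ≤ D) (x : Fin n → ℝ) (hx : euclNorm x = 1)
    (h1 : D ≤ LCD α γ x) (h2 : LCD α γ x ≤ 2 * D) :
    ∃ p : Fin n → ℤ, 0 < euclNorm (fun i => (p i : ℝ)) ∧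
      euclNorm (fun i => (p i : ℝ)) ≤ 3 * D ∧
      euclNorm (x - (euclNorm (fun i => (p i : ℝ)))⁻¹ • (fun i => (p i : ℝ))) ≤ 2 * α / D :=
  net_of_lcd_level_set_general γ α D hα hD x hx h1 h2
end
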